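/- (Theorem 3, matrix form.) Let p, q, n be positive integers with p + q = n + 1, let M_p, M_q, M_b be natural numbers, and let C ∈ ℝ^{M_p×M_q} and T ∈ ℝ^{M_b×M_q} be arbitrary real matrices (representing the coboundary operator d^{n−q} and the trace operator tr^{n−q}). Set d_i = (−1)^p Cᵀ and d_b = (−1)^{p−1} Tᵀ. On the space (ℝ^{M_p}×ℝ^{M_q}×ℝ^{M_b}) × (ℝ^{M_p}×ℝ^{M_q}×ℝ^{M_b}) of flow–effort pairs ((f_p,f_q,f_b),(e_p,e_q,e_b)), define the symmetric bilinear form ⟪((f_p¹,f_q¹,f_b¹),(e_p¹,e_q¹,e_b¹)),((f_p²,f_q²,f_b²),(e_p²,e_q²,e_b²))⟫ = (−1)^{p(q−1)}(e_p¹ᵀf_p² + e_p²ᵀf_p¹) + (e_q¹ᵀf_q² + e_q²ᵀf_q¹) + (e_b¹ᵀf_b² + e_b²ᵀf_b¹). Then the linear subspace D̃_d = { ((f_p,f_q,f_b),(e_p,e_q,e_b)) : f_p = (−1)^{pq+1} C e_q, f_q = d_i e_p + d_b f_b, e_b = (−1)^p T e_q } satisfies D̃_d = D̃_d^⊥, i.e.,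 D̃_d is a Dirac structure with respect to this pairing. -/
import Mathlib


open Matrix

/-- Flow–effort pairs ((f_p,f_q,f_b),(e_p,e_q,e_b)) on ℝ^{M_p}×ℝ^{M_q}×ℝ^{M_b}. -/
abbrev FlowEffort (Mp Mq Mb : ℕ) :=
  ((Fin Mp → ℝ) × (Fin Mq → ℝ) × (Fin Mb → ℝ)) ×
    ((Fin Mp → ℝ) × (Fin Mq → ℝ) × (Fin Mb → ℝ))

/-- The symmetric bilinear pairing of Theorem 3, with reordering sign (−1)^{p(q−1)}
on the p-components. -/
def pairingDt (p q : ℕ) {Mp Mq Mb : ℕ} (z w : FlowEffort Mp Mq Mb) : ℝ :=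
  (-1 : ℝ) ^ (p * (q - 1)) * (z.2.1 ⬝ᵥ w.1.1 + w.2.1 ⬝ᵥ z.1.1)
    + (z.2.2.1 ⬝ᵥ w.1.2.1 + w.2.2.1 ⬝ᵥ z.1.2.1)
    + (z.2.2.2 ⬝ᵥ w.1.2.2 + w.2.2.2 ⬝ᵥ z.1.2.2)

/-- The second simplicial Dirac structure D̃_d in matrix form: with
d_i = (−1)^p Cᵀ and d_b = (−1)^{p−1} Tᵀ,
f_p = (−1)^{pq+1} C e_q, f_q = d_i e_p + d_b f_b, e_b = (−1)^p T e_q. -/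
def simplicialDiracTilde (p q : ℕ) {Mp Mq Mb : ℕ}
    (C : Matrix (Fin Mp) (Fin Mq) ℝ) (T : Matrix (Fin Mb) (Fin Mq) ℝ) :
    Set (FlowEffort Mp Mq Mb) :=
  {z | z.1.1 = (-1 : ℝ) ^ (p * q + 1) • C.mulVec z.2.2.1
      ∧ z.1.2.1 = ((-1 : ℝ) ^ p • Cᵀ).mulVec z.2.1
          + ((-1 : ℝ) ^ (p - 1) • Tᵀ).mulVec z.1.2.2
      ∧ z.2.2.2 = (-1 : ℝ) ^ p • T.mulVec z.2.2.1}

/- Auxiliary lemmas. -/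

lemma transdot {m k : ℕ} (M : Matrix (Fin m) (Fin k) ℝ) (u : Fin k → ℝ) (v : Fin m → ℝ) :
    u ⬝ᵥ (Mᵀ *ᵥ v) = (M *ᵥ u) ⬝ᵥ v := by
  rw [Matrix.mulVec_transpose, dotProduct_comm, dotProduct_comm (M *ᵥ u),
    Matrix.dotProduct_mulVec]

lemma transdot2 {m k : ℕ} (M : Matrix (Fin m) (Fin k) ℝ) (u : Fin m → ℝ) (v : Fin k → ℝ) :
    u ⬝ᵥ (M *ᵥ v) = (Mᵀ *ᵥ u) ⬝ᵥ v := by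
  have := transdot Mᵀ u v
  rwa [Matrix.transpose_transpose] at this

lemma dot_all_zero {m : ℕ} {u : Fin m → ℝ} (h : ∀ v, v ⬝ᵥ u = 0) : u = 0 := by
  have := h u
  rwa [dotProduct_self_eq_zero] at this

/-- Forward inclusion: D̃_d is isotropic. -/
lemma simplicialDiracTilde_isotropic (p' q' : ℕ) {Mp Mq Mb : ℕ}
    (C : Matrix (Fin Mp) (Fin Mq) ℝ) (T : Matrix (Fin Mb) (Fin Mq) ℝ)
    (z w : FlowEffort Mp Mq Mb)
    (hz : z ∈ simplicialDiracTilde (p'+1) (q'+1) C T)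
    (hw : w ∈ simplicialDiracTilde (p'+1) (q'+1) C T) :
    pairingDt (p'+1) (q'+1) z w = 0 := by
  obtain ⟨hz1, hz2, hz3⟩ := hz
  obtain ⟨hw1, hw2, hw3⟩ := hw
  obtain ⟨A, hA⟩ : ∃ A : ℝ, (-1 : ℝ) ^ ((p'+1) * q') = A := ⟨_, rfl⟩
  obtain ⟨B, hB⟩ : ∃ B : ℝ, (-1 : ℝ) ^ p' = B := ⟨_, rfl⟩
  have hA2 : A * A = 1 := by rw [← hA, ← pow_add]; exact Even.neg_one_pow ⟨_, rfl⟩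
  have hB2 : B * B = 1 := by rw [← hB, ← pow_add]; exact Even.neg_one_pow ⟨_, rfl⟩
  have e1 : (-1 : ℝ) ^ ((p'+1) * (q'+1) + 1) = A * B := by
    rw [← hA, ← hB, show (p'+1)*(q'+1)+1 = ((p'+1)*q' + p') + 2 by ring, pow_add, pow_add]
    norm_num
  have e2 : (-1 : ℝ) ^ (p'+1) = -B := by rw [← hB, pow_succ]; ring
  have e3 : (-1 : ℝ) ^ ((p'+1) * ((q'+1) - 1)) = A := by norm_num; exact hA
  have e4 : (-1 : ℝ) ^ ((p'+1) - 1) = B := by simpa using hB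
  unfold pairingDt
  rw [hz1, hz2, hz3, hw1, hw2, hw3, e1, e2, e3, e4]
  simp only [Matrix.smul_mulVec, Matrix.mulVec_add, dotProduct_add,
    add_dotProduct, dotProduct_smul, smul_dotProduct, smul_eq_mul,
    transdot, smul_smul]
  rw [dotProduct_comm (C *ᵥ z.2.2.1) w.2.1, dotProduct_comm (C *ᵥ w.2.2.1) z.2.1,
    dotProduct_comm (T *ᵥ z.2.2.1) w.1.2.2]
  linear_combination (B * (z.2.1 ⬝ᵥ (C *ᵥ w.2.2.1)) + B * (w.2.1 ⬝ᵥ (C *ᵥ z.2.2.1))) * hA2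

/-- Backward inclusion: anything orthogonal to D̃_d lies in D̃_d. -/
lemma simplicialDiracTilde_coisotropic (p' q' : ℕ) {Mp Mq Mb : ℕ}
    (C : Matrix (Fin Mp) (Fin Mq) ℝ) (T : Matrix (Fin Mb) (Fin Mq) ℝ)
    (z : FlowEffort Mp Mq Mb)
    (hz : ∀ w ∈ simplicialDiracTilde (p'+1) (q'+1) C T, pairingDt (p'+1) (q'+1) z w = 0) :
    z ∈ simplicialDiracTilde (p'+1) (q'+1) C T := by
  obtain ⟨A, hA⟩ : ∃ A : ℝ, (-1 : ℝ) ^ ((p'+1) * q') = A := ⟨_, rfl⟩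
  obtain ⟨B, hB⟩ : ∃ B : ℝ, (-1 : ℝ) ^ p' = B := ⟨_, rfl⟩
  have hA2 : A * A = 1 := by rw [← hA, ← pow_add]; exact Even.neg_one_pow ⟨_, rfl⟩
  have hB2 : B * B = 1 := by rw [← hB, ← pow_add]; exact Even.neg_one_pow ⟨_, rfl⟩
  have e1 : (-1 : ℝ) ^ ((p'+1) * (q'+1) + 1) = A * B := by
    rw [← hA, ← hB, show (p'+1)*(q'+1)+1 = ((p'+1)*q' + p') + 2 by ring, pow_add, pow_add]
    norm_num
  have e2 : (-1 : ℝ) ^ (p'+1) = -B := by rw [← hB, pow_succ]; ring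
  have e3 : (-1 : ℝ) ^ ((p'+1) * ((q'+1) - 1)) = A := by norm_num; exact hA
  have e4 : (-1 : ℝ) ^ ((p'+1) - 1) = B := by simpa using hB
  refine ⟨?_, ?_, ?_⟩
  · -- f_p equation
    have key : ∀ v, v ⬝ᵥ (z.1.1 - (A * B) • (C *ᵥ z.2.2.1)) = 0 := by
      intro v
      have h := hz ((0, ((-1 : ℝ)^(p'+1) • Cᵀ) *ᵥ v, 0), (v, 0, 0))
        ⟨by simp, by simp, by simp⟩
      simp only [pairingDt, dotProduct_zero, zero_dotProduct, add_zero,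
        zero_add, Matrix.smul_mulVec, dotProduct_smul, smul_eq_mul,
        transdot, e2, e3] at h
      rw [dotProduct_comm (C *ᵥ z.2.2.1) v] at h
      simp only [dotProduct_sub, dotProduct_smul, smul_eq_mul]
      linear_combination A * h - (v ⬝ᵥ z.1.1) * hA2
    have h0 := sub_eq_zero.mp (dot_all_zero key)
    rw [h0, e1]
  · -- f_q equation
    have key : ∀ v, v ⬝ᵥ (z.1.2.1 - ((-B) • (Cᵀ *ᵥ z.2.1) + B • (Tᵀ *ᵥ z.1.2.2))) = 0 := by
      intro v
      have h := hz (((-1 : ℝ)^((p'+1)*(q'+1)+1) • (C *ᵥ v), 0, 0),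
          (0, v, (-1 : ℝ)^(p'+1) • (T *ᵥ v)))
        ⟨by simp [Matrix.smul_mulVec], by simp, by simp [Matrix.smul_mulVec]⟩
      simp only [pairingDt, dotProduct_zero, zero_dotProduct, add_zero,
        zero_add, Matrix.smul_mulVec, dotProduct_smul, smul_dotProduct,
        smul_eq_mul, transdot2, e1, e2, e3] at h
      rw [dotProduct_comm (Cᵀ *ᵥ z.2.1) v, dotProduct_comm (T *ᵥ v) z.1.2.2,
        transdot2 T z.1.2.2 v, dotProduct_comm (Tᵀ *ᵥ z.1.2.2) v] at h
      simp only [dotProduct_sub, dotProduct_add, dotProduct_smul,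
        smul_eq_mul]
      linear_combination h - B * (v ⬝ᵥ (Cᵀ *ᵥ z.2.1)) * hA2
    have h0 := sub_eq_zero.mp (dot_all_zero key)
    rw [h0, e2, e4]
    simp [Matrix.smul_mulVec, Matrix.neg_mulVec, neg_smul]
  · -- e_b equation
    have key : ∀ v, v ⬝ᵥ (z.2.2.2 - (-B) • (T *ᵥ z.2.2.1)) = 0 := by
      intro v
      have h := hz ((0, ((-1 : ℝ)^((p'+1)-1) • Tᵀ) *ᵥ v, v), (0, 0, 0))
        ⟨by simp, by simp, by simp⟩
      simp only [pairingDt, dotProduct_zero, zero_dotProduct, add_zero,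
        zero_add, Matrix.smul_mulVec, dotProduct_smul, smul_eq_mul,
        transdot, e3, e4] at h
      rw [dotProduct_comm (T *ᵥ z.2.2.1) v, dotProduct_comm z.2.2.2 v] at h
      simp only [dotProduct_sub, dotProduct_smul, smul_eq_mul]
      linear_combination h
    have h0 := sub_eq_zero.mp (dot_all_zero key)
    rw [h0, e2]

/-- Theorem 3, matrix form: the simplicial Dirac structure D̃_d equals its
orthogonal complement with respect to the pairing, i.e. it is a Dirac structure. -/
theorem simplicialDiracTilde_is_dirac (p q n Mp Mq Mb : ℕ)
    (hp : 0 < p) (hq : 0 < q) (hn : 0 < n) (hpq : p + q = n + 1)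
    (C : Matrix (Fin Mp) (Fin Mq) ℝ) (T : Matrix (Fin Mb) (Fin Mq) ℝ) :
    simplicialDiracTilde p q C T =
      {z | ∀ w ∈ simplicialDiracTilde p q C T, pairingDt p q z w = 0} := by
  obtain ⟨p', rfl⟩ : ∃ p', p = p' + 1 := ⟨p - 1, (Nat.succ_pred_eq_of_pos hp).symm⟩
  obtain ⟨q', rfl⟩ : ∃ q', q = q' + 1 := ⟨q - 1, (Nat.succ_pred_eq_of_pos hq).symm⟩
  ext z
  constructor
  · intro hzD w hw
    exact simplicialDiracTilde_isotropic p' q' C T z w hzD hw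
  · intro hz
    exact simplicialDiracTilde_coisotropic p' q' C T z hz
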